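/- Let W, V_1, ..., V_n be a Nica-covariant isometric representation of the odometer semigroup O_n on H. Then the subspace H_u^W = ⋂_{m≥0} W^m H reduces each V_i (it is invariant under V_i and V_i* for all i). -/

import Mathlib

/-!
The relations give `W^n V_i = V_i W`, and Nica covariance gives `(W^*)^n V_i = V_i W^*`, that is
`V_i^* W^n = W V_i^*`. Hence `V_i` maps `W^m H` into `W^{nm} H ⊆ W^m H`, and `V_i^*` maps
`W^{nm} H` into `W^m H`; both therefore preserve `⋂_m W^m H`.
-/

open ContinuousLinearMap

theorem Module.End.apply_mem_iInf_range_pow_of_mul_pow_eq_pow_mul {R M : Type*} [Semiring R]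
    [AddCommMonoid M] [Module R M] {T W : Module.End R M} {k l : ℕ} (hl : 0 < l)
    (h : T * W ^ k = W ^ l * T) {x : M} (hx : x ∈ ⨅ m, LinearMap.range (W ^ m)) :
    T x ∈ ⨅ m, LinearMap.range (W ^ m) := by
  rw [Submodule.mem_iInf] at hx ⊢
  intro m
  obtain ⟨y, rfl⟩ := hx (k * m)
  have hcomm : T * W ^ (k * m) = W ^ m * (W ^ (l * m - m) * T) := by
    rw [← mul_assoc, pow_mul_pow_sub W (Nat.le_mul_of_pos_left m hl), pow_mul, pow_mul,
      (SemiconjBy.pow_right h m).eq]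
  exact ⟨(W ^ (l * m - m) * T) y, by
    rw [← Module.End.mul_apply, ← hcomm, Module.End.mul_apply]⟩

namespace Odometer

variable {M : Type*} [Monoid M] {n : ℕ} {w : M} {v : Fin n → M}

theorem eq_pow_sub_mul
    (hwv : ∀ i : Fin n, ∀ h : (i : ℕ) + 1 < n, w * v i = v ⟨i + 1, h⟩)
    {a b : ℕ} (hab : a ≤ b) (hb : b < n) :
    v ⟨b, hb⟩ = w ^ (b - a) * v ⟨a, by omega⟩ := by
  induction b, hab using Nat.le_induction with
  | base => rw [Nat.sub_self, pow_zero, one_mul]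
  | succ b hab ih =>
    rw [← hwv ⟨b, by omega⟩ hb, ih (by omega), ← mul_assoc, ← pow_succ',
      Nat.sub_add_comm hab]

theorem pow_mul_eq_mul (hn : 0 < n)
    (hwv : ∀ i : Fin n, ∀ h : (i : ℕ) + 1 < n, w * v i = v ⟨i + 1, h⟩)
    (hwvn : w * v ⟨n - 1, Nat.sub_one_lt_of_lt hn⟩ = v ⟨0, hn⟩ * w) (i : Fin n) :
    w ^ n * v i = v i * w := by
  have hv : ∀ j : Fin n, v j = w ^ (j : ℕ) * v ⟨0, hn⟩ := fun j =>
    eq_pow_sub_mul hwv (Nat.zero_le j) j.isLt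
  have h0 : w ^ n * v ⟨0, hn⟩ = v ⟨0, hn⟩ * w := by
    rw [← hwvn, hv ⟨n - 1, Nat.sub_one_lt_of_lt hn⟩, ← mul_assoc, ← pow_succ',
      Nat.sub_add_cancel hn]
  rw [hv i, ← mul_assoc, ← pow_add, add_comm, pow_add, mul_assoc, h0, mul_assoc]

theorem pow_mul_eq_mul_of_mul_eq_one {u : M} (hn : 0 < n)
    (hwv : ∀ i : Fin n, ∀ h : (i : ℕ) + 1 < n, w * v i = v ⟨i + 1, h⟩)
    (hu : u * w = 1) (huv : u * v ⟨0, hn⟩ = v ⟨n - 1, Nat.sub_one_lt_of_lt hn⟩ * u)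
    (i : Fin n) :
    u ^ n * v i = v i * u := by
  have hdown : ∀ {a b : ℕ} (hab : a ≤ b) (hb : b < n),
      u ^ (b - a) * v ⟨b, hb⟩ = v ⟨a, by omega⟩ := fun hab hb => by
    rw [eq_pow_sub_mul hwv hab hb, ← mul_assoc, pow_mul_pow_eq_one _ hu, one_mul]
  have hsplit : u ^ n = u ^ (n - 1 - i) * (u * u ^ (i : ℕ)) := by
    rw [← pow_succ', ← pow_add]
    congr 1
    omega
  calc u ^ n * v i = u ^ (n - 1 - i) * (u * (u ^ (i - 0 : ℕ) * v i)) := by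
        rw [hsplit, Nat.sub_zero, mul_assoc, mul_assoc]
    _ = u ^ (n - 1 - i) * v ⟨n - 1, Nat.sub_one_lt_of_lt hn⟩ * u := by
        rw [hdown (Nat.zero_le i) i.isLt, huv, mul_assoc]
    _ = v i * u := by rw [hdown (Nat.le_sub_one_of_lt i.isLt)]

end Odometer

/-- For a Nica-covariant isometric representation `{W, V_1, …, V_n}` of `O_n`,
the subspace `H_u^W = ⋂_{m ≥ 0} W^m H` reduces each `V_i`. -/
theorem stmt_10 {H : Type*} [NormedAddCommGroup H] [InnerProductSpace ℂ H] [CompleteSpace H]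
    (n : ℕ) (hn : 0 < n) (W : H →L[ℂ] H) (V : Fin n → H →L[ℂ] H)
    (hWiso : adjoint W ∘L W = 1)
    (hWV : ∀ i : Fin n, ∀ h : (i : ℕ) + 1 < n, W ∘L V i = V ⟨(i : ℕ) + 1, h⟩)
    (hWVn : W ∘L V ⟨n - 1, by omega⟩ = V ⟨0, hn⟩ ∘L W)
    (hNC : adjoint W ∘L V ⟨0, hn⟩ = V ⟨n - 1, by omega⟩ ∘L adjoint W)
    (HuW : Submodule ℂ H) (hHuW : HuW = ⨅ m : ℕ, LinearMap.range ((W ^ m : H →L[ℂ] H) : H →ₗ[ℂ] H)) :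
    ∀ i : Fin n, ∀ x ∈ HuW, V i x ∈ HuW ∧ adjoint (V i) x ∈ HuW := by
  intro i x hx
  subst hHuW
  simp only [toLinearMap_pow] at hx ⊢
  have hrange : ∀ {T : H →L[ℂ] H} {k l : ℕ}, 0 < l → T * W ^ k = W ^ l * T →
      T x ∈ ⨅ m, LinearMap.range ((W : H →ₗ[ℂ] H) ^ m) := fun hl h =>
    Module.End.apply_mem_iInf_range_pow_of_mul_pow_eq_pow_mul hl
      (by simpa only [toLinearMap_mul, toLinearMap_pow] using congrArg toLinearMap h) hx
  constructor
  · refine hrange (k := 1) hn ?_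
    rw [pow_one, Odometer.pow_mul_eq_mul hn hWV hWVn]
  · refine hrange (k := n) (l := 1) one_pos ?_
    simpa only [star_mul, star_pow, star_eq_adjoint, adjoint_adjoint, pow_one] using
      congrArg star (Odometer.pow_mul_eq_mul_of_mul_eq_one hn hWV hWiso hNC i)
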